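/- For every n ∈ ℕ, the rational number 729^n · (1/9)_n (4/9)_n (5/9)_n / ((1/3)_n · (n!)²) is an integer. (Equivalently, the hypergeometric series ₃F₂([1/9, 4/9, 5/9], [1/3, 1], 27²·x) has integer Taylor coefficients: 1 + 60x + 20475x² + 9373650x³ + 4881796920x⁴ + ⋯.) -/

import Mathlib

/-!
Clearing denominators, the coefficient is `3ⁿ ∏ (9k+1)(9k+4)(9k+5) / (∏ (3k+1) · n!²)` with
products over `k < n`, and we compare `p`-adic valuations. For `p = 3` the denominator has
valuation `2 v₃(n!) ≤ n`. For `p ≠ 3`, Legendre-type counting turns both valuations into sums over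
`q = pⁱ` of the numbers of `k < n` with `q ∣ 9k + a`, which is `⌊n/q⌋` or `⌊n/q⌋ + 1` according as
the residue of `a·w` mod `q` is below `n mod q`, where `q ∣ 9w + 1`. Writing `9w + 1 = cq`, the
residues of `a·w` mod `q` are ordered like those of `a·c` mod `9`, and for `3 ∤ c` one of
`c, 4c, 5c` is smaller than `3c` mod `9` (Christol's interlacing condition).
-/

open Finset
open scoped Nat

theorem mul_mul_mod_add_eq_of_mul_add_one_eq {m w q c a : ℕ} (h : m * w + 1 = q * c) (ha : a < m) :
    m * (a * w % q) + a = a * c % m * q := by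
  have hq : 0 < q := Nat.pos_of_ne_zero (by rintro rfl; omega)
  set r := a * w % q
  set j := a * w / q
  have hr : r < q := Nat.mod_lt _ hq
  have hsplit : q * j + r = a * w := Nat.div_add_mod _ _
  have hmul : m * r + a + q * (m * j) = q * (a * c) := by
    calc m * r + a + q * (m * j) = m * (q * j + r) + a := by ring
      _ = a * (m * w + 1) := by rw [hsplit]; ring
      _ = q * (a * c) := by rw [h]; ring
  obtain ⟨s, hs⟩ : q ∣ m * r + a :=
    (Nat.dvd_add_left (dvd_mul_right q _)).1 (hmul ▸ dvd_mul_right _ _)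
  have hsm : s < m := by
    refine Nat.lt_of_mul_lt_mul_left (a := q) ?_
    calc q * s = m * r + a := hs.symm
      _ < m * (r + 1) := by rw [mul_add]; omega
      _ ≤ m * q := Nat.mul_le_mul_left _ hr
      _ = q * m := mul_comm _ _
  have hac : s + m * j = a * c := Nat.eq_of_mul_eq_mul_left hq (by rw [mul_add, ← hs, hmul])
  rw [hs, ← hac, Nat.add_mul_mod_self_left, Nat.mod_eq_of_lt hsm, mul_comm]

theorem min_mod_le_three_mul_mod {q w : ℕ} (hw : q ∣ 9 * w + 1) :
    min (w % q) (min (4 * w % q) (5 * w % q)) ≤ 3 * w % q := by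
  obtain ⟨c, hc⟩ := hw
  have hc3 : c % 3 ≠ 0 := fun h => by
    have : 3 ∣ 9 * w + 1 := hc ▸ (Nat.dvd_of_mod_eq_zero h).mul_left q
    omega
  have e1 := mul_mul_mod_add_eq_of_mul_add_one_eq (a := 1) hc (by norm_num)
  have e3 := mul_mul_mod_add_eq_of_mul_add_one_eq (a := 3) hc (by norm_num)
  have e4 := mul_mul_mod_add_eq_of_mul_add_one_eq (a := 4) hc (by norm_num)
  have e5 := mul_mul_mod_add_eq_of_mul_add_one_eq (a := 5) hc (by norm_num)
  rw [one_mul, one_mul] at e1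
  have hlt : c % 9 < 3 * c % 9 ∨ 4 * c % 9 < 3 * c % 9 ∨ 5 * c % 9 < 3 * c % 9 := by
    have := Nat.mod_lt c (show 9 > 0 by norm_num)
    interval_cases h : c % 9 <;> omega
  rcases hlt with h | h | h <;>
  · have := Nat.mul_le_mul_right q h
    rw [Nat.succ_mul] at this
    omega

theorem exists_dvd_mul_add_one {s q : ℕ} (hq : q ≠ 0) (h : s.Coprime q) : ∃ w, q ∣ s * w + 1 := by
  have : NeZero q := ⟨hq⟩
  refine ⟨(-(s : ZMod q)⁻¹).val, (ZMod.natCast_eq_zero_iff _ _).1 ?_⟩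
  push_cast
  rw [ZMod.natCast_zmod_val, mul_neg, ZMod.coe_mul_inv_eq_one s h, neg_add_cancel]

theorem dvd_mul_add_iff_modEq {q s a v : ℕ} (hs : s.Coprime q) (hv : q ∣ s * v + a) (k : ℕ) :
    q ∣ s * k + a ↔ k ≡ v [MOD q] := by
  have hv' := Nat.modEq_zero_iff_dvd.2 hv
  refine ⟨fun h => ?_, fun h => ?_⟩
  · exact ((Nat.modEq_zero_iff_dvd.2 h).trans hv'.symm).add_right_cancel' a
      |>.cancel_left_of_coprime hs.symm
  · exact Nat.modEq_zero_iff_dvd.1 (((h.mul_left s).add_right a).trans hv')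

theorem count_dvd_mul_add {q s a v : ℕ} (hq : q ≠ 0) (hs : s.Coprime q) (hv : q ∣ s * v + a)
    (n : ℕ) : n.count (q ∣ s * · + a) = n / q + if v % q < n % q then 1 else 0 := by
  simp only [dvd_mul_add_iff_modEq hs hv]
  exact Nat.count_modEq_card n (Nat.pos_of_ne_zero hq) v

theorem count_three_mul_add_one_add_le {q : ℕ} (h3 : Nat.Coprime 3 q) (n : ℕ) :
    n.count (q ∣ 3 * · + 1) + 2 * (n / q) ≤
      n.count (q ∣ 9 * · + 1) + n.count (q ∣ 9 * · + 4) + n.count (q ∣ 9 * · + 5) := by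
  have hq : q ≠ 0 := by rintro rfl; norm_num at h3
  have h9 : Nat.Coprime 9 q := by simpa using h3.pow_left 2
  obtain ⟨w, hw⟩ := exists_dvd_mul_add_one hq h9
  have hw3 : q ∣ 3 * (3 * w) + 1 := by rwa [← mul_assoc]
  have hw4 : q ∣ 9 * (4 * w) + 4 := by rw [mul_left_comm]; simpa [mul_add] using hw.mul_left 4
  have hw5 : q ∣ 9 * (5 * w) + 5 := by rw [mul_left_comm]; simpa [mul_add] using hw.mul_left 5
  rw [count_dvd_mul_add hq h3 hw3, count_dvd_mul_add hq h9 hw, count_dvd_mul_add hq h9 hw4,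
    count_dvd_mul_add hq h9 hw5]
  have := min_mod_le_three_mul_mod hw
  split_ifs <;> omega

theorem factorization_prod_range_eq_sum_count {p b n : ℕ} (hp : p.Prime) {f : ℕ → ℕ}
    (hpos : ∀ k < n, 0 < f k) (hlt : ∀ k < n, f k < p ^ b) :
    (∏ k ∈ range n, f k).factorization p = ∑ i ∈ Ico 1 b, n.count (p ^ i ∣ f ·) := by
  rw [Nat.factorization_prod_apply fun k hk => (hpos k (mem_range.1 hk)).ne']
  simp_rw [Nat.count_eq_card_filter_range, card_filter]
  rw [sum_comm]
  refine sum_congr rfl fun k hk => ?_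
  rw [Nat.factorization_eq_card_pow_dvd_of_lt hp (hpos k (mem_range.1 hk)) (hlt k (mem_range.1 hk)),
    card_filter]

theorem factorization_prod_mul_sq_factorial_le_of_ne_three {p : ℕ} (hp : p.Prime) (hp3 : p ≠ 3)
    (n : ℕ) :
    (∏ k ∈ range n, (3 * k + 1)).factorization p + 2 * (n)!.factorization p ≤
      (∏ k ∈ range n, (9 * k + 1)).factorization p + (∏ k ∈ range n, (9 * k + 4)).factorization p +
        (∏ k ∈ range n, (9 * k + 5)).factorization p := by
  have hval (f : ℕ → ℕ) (hf : ∀ k < n, 0 < f k ∧ f k < 9 * n) :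
      (∏ k ∈ range n, f k).factorization p = ∑ i ∈ Ico 1 (9 * n + 1), n.count (p ^ i ∣ f ·) :=
    factorization_prod_range_eq_sum_count hp (fun k hk => (hf k hk).1) fun k hk =>
      (hf k hk).2.trans (Nat.lt_pow_self hp.one_lt) |>.trans
        (Nat.pow_lt_pow_right hp.one_lt (by omega))
  have hlog : Nat.log p n < 9 * n + 1 := (Nat.log_le_self p n).trans_lt (by omega)
  rw [hval (3 * · + 1) (fun k _ => by omega), hval (9 * · + 1) (fun k _ => by omega),
    hval (9 * · + 4) (fun k _ => by omega), hval (9 * · + 5) (fun k _ => by omega),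
    Nat.factorization_factorial hp hlog, mul_sum, ← sum_add_distrib, ← sum_add_distrib,
    ← sum_add_distrib]
  refine sum_le_sum fun i _ => count_three_mul_add_one_add_le ?_ n
  exact Nat.Coprime.pow_right i ((Nat.coprime_primes Nat.prime_three hp).2 hp3.symm)

theorem factorization_three_prod_mul_sq_factorial_le (n : ℕ) :
    (∏ k ∈ range n, (3 * k + 1)).factorization 3 + 2 * (n)!.factorization 3 ≤ n := by
  have hcop : (∏ k ∈ range n, (3 * k + 1)).factorization 3 = 0 :=
    Nat.factorization_eq_zero_of_not_dvd fun h => by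
      obtain ⟨k, -, hk⟩ := (Nat.prime_iff.1 Nat.prime_three).dvd_finsetProd_iff _ |>.1 h
      omega
  have hlegendre := Nat.sub_one_mul_factorization_factorial (n := n) Nat.prime_three
  omega

theorem prod_mul_sq_factorial_dvd (n : ℕ) :
    (∏ k ∈ range n, (3 * k + 1)) * (n)! ^ 2 ∣
      3 ^ n * ((∏ k ∈ range n, (9 * k + 1)) * (∏ k ∈ range n, (9 * k + 4)) *
        ∏ k ∈ range n, (9 * k + 5)) := by
  refine (Nat.factorization_le_iff_dvd (by positivity) (by positivity)).1 fun p => ?_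
  rw [Nat.factorization_mul, Nat.factorization_mul, Nat.factorization_mul, Nat.factorization_mul,
    Nat.factorization_pow, Nat.factorization_pow,
    Nat.prime_three.factorization] <;> try positivity
  simp only [Finsupp.coe_add, Pi.add_apply, Finsupp.smul_apply, smul_eq_mul, Finsupp.single_apply]
  rcases eq_or_ne p 3 with rfl | hp3
  · have := factorization_three_prod_mul_sq_factorial_le n
    simp only [if_true]
    omega
  by_cases hp : p.Prime
  · have := factorization_prod_mul_sq_factorial_le_of_ne_three hp hp3 n
    simp only [if_neg hp3.symm]
    omega
  · simp [Nat.factorization_eq_zero_of_not_prime _ hp]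

theorem ascPochhammer_eval_eq_prod_range {R : Type*} [CommSemiring R] (n : ℕ) (x : R) :
    (ascPochhammer R n).eval x = ∏ k ∈ range n, (x + k) := by
  induction n with
  | zero => simp
  | succ n ih => simp [ascPochhammer_succ_right, ih, prod_range_succ]

theorem pow_mul_ascPochhammer_eval_div {K : Type*} [Field K] {d : K} (hd : d ≠ 0) (a : K)
    (n : ℕ) : d ^ n * (ascPochhammer K n).eval (a / d) = ∏ k ∈ range n, (d * k + a) := by
  rw [ascPochhammer_eval_eq_prod_range, pow_eq_prod_const, ← prod_mul_distrib]
  refine prod_congr rfl fun k _ => ?_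
  field_simp
  ring

/-- The hypergeometric series `₃F₂([1/9, 4/9, 5/9], [1/3, 1], 27²·x)` has integer
Taylor coefficients: for every `n`, `729^n (1/9)_n (4/9)_n (5/9)_n / ((1/3)_n (n!)²)`
is an integer. -/
theorem hypergeom_1_9_4_9_5_9_integer_coeffs (n : ℕ) :
    ∃ m : ℤ,
      729 ^ n * (ascPochhammer ℚ n).eval (1 / 9) * (ascPochhammer ℚ n).eval (4 / 9) *
          (ascPochhammer ℚ n).eval (5 / 9) /
        ((ascPochhammer ℚ n).eval (1 / 3) * (Nat.factorial n : ℚ) ^ 2) = (m : ℚ) := by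
  have h9 (a : ℚ) := pow_mul_ascPochhammer_eval_div (show (9 : ℚ) ≠ 0 by norm_num) a n
  have h3 := pow_mul_ascPochhammer_eval_div (show (3 : ℚ) ≠ 0 by norm_num) 1 n
  obtain ⟨m, hm⟩ := prod_mul_sq_factorial_dvd n
  have hmℚ := congrArg (Nat.cast : ℕ → ℚ) hm
  push_cast at hmℚ
  rw [← h9 1, ← h9 4, ← h9 5, ← h3] at hmℚ
  have hden : (ascPochhammer ℚ n).eval (1 / 3) * (n ! : ℚ) ^ 2 ≠ 0 := by
    have := ascPochhammer_pos n (1 / 3 : ℚ) (by norm_num)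
    positivity
  refine ⟨m, ?_⟩
  rw [Int.cast_natCast, div_eq_iff hden, show (729 : ℚ) ^ n = 9 ^ n * 9 ^ n * 9 ^ n by
    rw [← mul_pow, ← mul_pow]; norm_num]
  refine mul_left_cancel₀ (pow_ne_zero n (show (3 : ℚ) ≠ 0 by norm_num)) ?_
  linear_combination hmℚ
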